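/- arXiv:2310.19035 — 4 statements merged into one kernel-verified Lean document; each statement's English description precedes it below -/
import Mathlib

section
/- Let α, β ∈ [0,1] and let (Y, B_c, B_s) and (Y′, B_c′, B_s′) be independent triples, each distributed per P_{α,β}. Then the law of (Y, B_c′, B_s) equals P_{1/2, β}. In particular, in this generated distribution the coordinate occupying the invariant-subgraph position is independent of the label Y. -/
open MeasureTheory
open scoped ENNReal

variable {α' β' : Type*} [MeasurableSpace α'] [MeasurableSpace β']

lemma mySmulProd (c : ℝ≥0∞) (μ : Measure α') (ν : Measure β') [SFinite μ] [SFinite ν] :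
    (c • μ).prod ν = c • μ.prod ν := by
  ext s hs
  rw [Measure.prod_apply hs, Measure.smul_apply, Measure.prod_apply hs,
    MeasureTheory.lintegral_smul_measure]

lemma myProdSmul (c : ℝ≥0∞) (μ : Measure α') (ν : Measure β') [SFinite μ] [SFinite ν] :
    μ.prod (c • ν) = c • μ.prod ν := by
  ext s hs
  rw [Measure.prod_apply hs, Measure.smul_apply, Measure.prod_apply hs, smul_eq_mul,
    ← MeasureTheory.lintegral_const_mul c (measurable_measure_prodMk_left hs)]
  simp [Measure.smul_apply, mul_comm]


/-- The Rademacher-type measure `Rad(γ)` on `ℤ`, putting mass `γ` on `-1` and `1-γ` on `1`. -/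
noncomputable def radMeas (γ : ℝ) : Measure ℤ :=
  ENNReal.ofReal γ • Measure.dirac (-1) + ENNReal.ofReal (1 - γ) • Measure.dirac 1

/-- The two-piece environment `P_{α,β}`: the joint law of `(Y, Y·R_c, Y·R_s)` where
`Y ~ Rad(1/2)` (uniform on `{-1,1}`), `R_c ~ Rad(α)`, `R_s ~ Rad(β)`, mutually independent. -/
noncomputable def twoPiece (α β : ℝ) : Measure (ℤ × ℤ × ℤ) :=
  Measure.map (fun t : ℤ × ℤ × ℤ => (t.1, t.1 * t.2.1, t.1 * t.2.2))
    ((radMeas (1 / 2)).prod ((radMeas α).prod (radMeas β)))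

/-- The distribution generated by recombining (with swapped featurizer estimates) the
estimated invariant part of an independent sample with the estimated spurious part of a
sample, keeping the first sample's label: the law of the triple whose first coordinate is
the first sample's label, second coordinate the second sample's invariant coordinate, and
third coordinate the first sample's spurious coordinate. -/
noncomputable def genEnv (α β : ℝ) : Measure (ℤ × ℤ × ℤ) :=
  Measure.map (fun q : (ℤ × ℤ × ℤ) × (ℤ × ℤ × ℤ) => (q.1.1, q.2.2.1, q.1.2.2))
    ((twoPiece α β).prod (twoPiece α β))

lemma twoPiece_eq (α β : ℝ) :
    twoPiece α β =
      (ENNReal.ofReal (1/2) * ENNReal.ofReal α * ENNReal.ofReal β) • Measure.dirac ((-1, 1, 1) : ℤ × ℤ × ℤ)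
      + (ENNReal.ofReal (1/2) * ENNReal.ofReal α * ENNReal.ofReal (1-β)) • Measure.dirac ((-1, 1, -1) : ℤ × ℤ × ℤ)
      + (ENNReal.ofReal (1/2) * ENNReal.ofReal (1-α) * ENNReal.ofReal β) • Measure.dirac ((-1, -1, 1) : ℤ × ℤ × ℤ)
      + (ENNReal.ofReal (1/2) * ENNReal.ofReal (1-α) * ENNReal.ofReal (1-β)) • Measure.dirac ((-1, -1, -1) : ℤ × ℤ × ℤ)
      + (ENNReal.ofReal (1/2) * ENNReal.ofReal α * ENNReal.ofReal β) • Measure.dirac ((1, -1, -1) : ℤ × ℤ × ℤ)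
      + (ENNReal.ofReal (1/2) * ENNReal.ofReal α * ENNReal.ofReal (1-β)) • Measure.dirac ((1, -1, 1) : ℤ × ℤ × ℤ)
      + (ENNReal.ofReal (1/2) * ENNReal.ofReal (1-α) * ENNReal.ofReal β) • Measure.dirac ((1, 1, -1) : ℤ × ℤ × ℤ)
      + (ENNReal.ofReal (1/2) * ENNReal.ofReal (1-α) * ENNReal.ofReal (1-β)) • Measure.dirac ((1, 1, 1) : ℤ × ℤ × ℤ) := by
  have hm : Measurable (fun t : ℤ × ℤ × ℤ => (t.1, t.1 * t.2.1, t.1 * t.2.2)) :=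
    measurable_of_countable _
  rw [twoPiece, radMeas, radMeas, radMeas]
  simp only [Measure.prod_add, Measure.add_prod, mySmulProd, myProdSmul,
    Measure.dirac_prod_dirac, smul_smul, Measure.map_add _ _ hm, Measure.map_smul,
    Measure.map_dirac' hm]
  norm_num [smul_smul, mul_comm, mul_left_comm]
  try abel

lemma ofReal_split {γ : ℝ} (h0 : 0 ≤ γ) (h1 : γ ≤ 1) :
    ENNReal.ofReal γ + ENNReal.ofReal (1 - γ) = 1 := by
  rw [← ENNReal.ofReal_add h0 (by linarith)]
  norm_num

lemma marg2 (α β : ℝ) (hα : α ∈ Set.Icc (0:ℝ) 1) (hβ : β ∈ Set.Icc (0:ℝ) 1) :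
    Measure.map (fun t : ℤ × ℤ × ℤ => t.2.1) (twoPiece α β) = radMeas (1/2) := by
  have hm : Measurable (fun t : ℤ × ℤ × ℤ => t.2.1) := measurable_of_countable _
  have h12 : (1:ℝ) - 1/2 = 1/2 := by norm_num
  rw [twoPiece_eq, radMeas, h12]
  simp only [Measure.map_add _ _ hm, Measure.map_smul, Measure.map_dirac' hm]
  have ha1 := ofReal_split hα.1 hα.2
  have hb1 := ofReal_split hβ.1 hβ.2
  set h := ENNReal.ofReal (1/2)
  set a := ENNReal.ofReal α
  set a' := ENNReal.ofReal (1-α)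
  set b := ENNReal.ofReal β
  set b' := ENNReal.ofReal (1-β)
  have hsum : h*a*b + h*a*b' + h*a'*b + h*a'*b' = h := by
    have : h*a*b + h*a*b' + h*a'*b + h*a'*b' = h*((a+a')*(b+b')) := by ring
    rw [this, ha1, hb1, one_mul, mul_one]
  have e : ∀ x : ℤ, (h*a*b) • Measure.dirac x + (h*a*b') • Measure.dirac x
      + (h*a'*b) • Measure.dirac x + (h*a'*b') • Measure.dirac x = h • Measure.dirac x := by
    intro x
    rw [← add_smul, ← add_smul, ← add_smul, hsum]
  rw [← e (-1), ← e 1]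
  abel

lemma marg13 (α β : ℝ) (hα : α ∈ Set.Icc (0:ℝ) 1) :
    Measure.map (fun t : ℤ × ℤ × ℤ => (t.1, t.2.2)) (twoPiece α β) =
      (ENNReal.ofReal (1/2) * ENNReal.ofReal β) • Measure.dirac ((-1, 1) : ℤ × ℤ)
      + (ENNReal.ofReal (1/2) * ENNReal.ofReal (1-β)) • Measure.dirac ((-1, -1) : ℤ × ℤ)
      + (ENNReal.ofReal (1/2) * ENNReal.ofReal β) • Measure.dirac ((1, -1) : ℤ × ℤ)
      + (ENNReal.ofReal (1/2) * ENNReal.ofReal (1-β)) • Measure.dirac ((1, 1) : ℤ × ℤ) := by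
  have hm : Measurable (fun t : ℤ × ℤ × ℤ => (t.1, t.2.2)) := measurable_of_countable _
  rw [twoPiece_eq]
  simp only [Measure.map_add _ _ hm, Measure.map_smul, Measure.map_dirac' hm]
  have ha1 := ofReal_split hα.1 hα.2
  set h := ENNReal.ofReal (1/2)
  set a := ENNReal.ofReal α
  set a' := ENNReal.ofReal (1-α)
  set b := ENNReal.ofReal β
  set b' := ENNReal.ofReal (1-β)
  have e : ∀ (c : ℝ≥0∞) (x : ℤ × ℤ), (h*a*c) • Measure.dirac x + (h*a'*c) • Measure.dirac x
      = (h*c) • Measure.dirac x := by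
    intro c x
    rw [← add_smul]
    congr 1
    have : h*a*c + h*a'*c = h*c*(a+a') := by ring
    rw [this, ha1, mul_one]
  rw [← e b (-1,1), ← e b' (-1,-1), ← e b (1,-1), ← e b' (1,1)]
  abel

instance twoPiece_sfinite (α β : ℝ) : SFinite (twoPiece α β) := by
  rw [twoPiece_eq]; infer_instance

lemma genEnv_eq (α β : ℝ) (hα : α ∈ Set.Icc (0:ℝ) 1) (hβ : β ∈ Set.Icc (0:ℝ) 1) :
    genEnv α β = twoPiece (1/2) β := by
  have m13 : Measurable (fun t : ℤ × ℤ × ℤ => (t.1, t.2.2)) := measurable_of_countable _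
  have m2 : Measurable (fun t : ℤ × ℤ × ℤ => t.2.1) := measurable_of_countable _
  have mφ : Measurable (fun p : (ℤ × ℤ) × ℤ => (p.1.1, p.2, p.1.2)) := measurable_of_countable _
  have mpm : Measurable (Prod.map (fun t : ℤ × ℤ × ℤ => (t.1, t.2.2))
      (fun t : ℤ × ℤ × ℤ => t.2.1)) := measurable_of_countable _
  have hcomp : (fun q : (ℤ × ℤ × ℤ) × (ℤ × ℤ × ℤ) => (q.1.1, q.2.2.1, q.1.2.2)) =
      (fun p : (ℤ × ℤ) × ℤ => (p.1.1, p.2, p.1.2)) ∘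
        (Prod.map (fun t : ℤ × ℤ × ℤ => (t.1, t.2.2)) (fun t : ℤ × ℤ × ℤ => t.2.1)) := rfl
  rw [genEnv, hcomp, ← Measure.map_map mφ mpm,
    ← Measure.map_prod_map _ _ m13 m2, marg13 α β hα, marg2 α β hα hβ]
  have h12 : (1:ℝ) - 1/2 = 1/2 := by norm_num
  rw [radMeas, h12, twoPiece_eq, h12]
  simp only [Measure.prod_add, Measure.add_prod, mySmulProd, myProdSmul,
    Measure.dirac_prod_dirac, smul_smul, Measure.map_add _ _ mφ, Measure.map_smul,
    Measure.map_dirac' mφ]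
  norm_num [smul_smul, mul_comm, mul_left_comm]
  try abel

/-- the generated environment equals the two-piece environment with invariant
parameter `1/2`; in particular the coordinate occupying the invariant-subgraph position is
independent of the label. -/
theorem env_generation_fail (α β : ℝ) (hα : α ∈ Set.Icc (0 : ℝ) 1)
    (hβ : β ∈ Set.Icc (0 : ℝ) 1) :
    genEnv α β = twoPiece (1 / 2) β ∧
    (∀ y bc : ℤ,
      genEnv α β {t : ℤ × ℤ × ℤ | t.1 = y ∧ t.2.1 = bc} =
        genEnv α β {t : ℤ × ℤ × ℤ | t.1 = y} *
          genEnv α β {t : ℤ × ℤ × ℤ | t.2.1 = bc}) := by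
  refine ⟨genEnv_eq α β hα hβ, fun y bc => ?_⟩
  rw [genEnv_eq α β hα hβ]
  have h12 : (1:ℝ) - 1/2 = 1/2 := by norm_num
  have hb1 := ofReal_split hβ.1 hβ.2
  have hh := ofReal_split (by norm_num : (0:ℝ) ≤ 1/2) (by norm_num : (1:ℝ)/2 ≤ 1)
  rw [h12] at hh
  rw [twoPiece_eq, h12]
  set h := ENNReal.ofReal (1/2)
  set b := ENNReal.ofReal β
  set b' := ENNReal.ofReal (1-β)
  simp only [Measure.add_apply, Measure.smul_apply, Measure.dirac_apply, smul_eq_mul,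
    Set.indicator_apply, Set.mem_setOf_eq]
  have trich : ∀ z : ℤ, z = -1 ∨ z = 1 ∨ ((-1:ℤ) ≠ z ∧ (1:ℤ) ≠ z) := by intro z; omega
  rcases trich y with hy|hy|⟨hy1,hy2⟩ <;> rcases trich bc with hc|hc|⟨hc1,hc2⟩
  · subst hy; subst hc
    norm_num
    have k1 : h*h*b + h*h*b' = h*h := by rw [← mul_add, hb1, mul_one]
    have k2 : h*h + h*h*b + h*h*b' = h := by
      have e : h*h + h*h*b + h*h*b' = h*h + h*h*(b+b') := by ring
      rw [e, hb1, mul_one, ← mul_add, hh, mul_one]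
    rw [k1, k2]
  · subst hy; subst hc
    norm_num
    have k1 : h*h*b + h*h*b' = h*h := by rw [← mul_add, hb1, mul_one]
    have k2 : h*h + h*h*b + h*h*b' = h := by
      have e : h*h + h*h*b + h*h*b' = h*h + h*h*(b+b') := by ring
      rw [e, hb1, mul_one, ← mul_add, hh, mul_one]
    rw [k1, k2]
  · subst hy; simp [hc1, hc2]
  · subst hy; subst hc
    norm_num
    have k1 : h*h*b + h*h*b' = h*h := by rw [← mul_add, hb1, mul_one]
    have k2 : h*h + h*h*b + h*h*b' = h := by
      have e : h*h + h*h*b + h*h*b' = h*h + h*h*(b+b') := by ring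
      rw [e, hb1, mul_one, ← mul_add, hh, mul_one]
    rw [k1, k2]
  · subst hy; subst hc
    norm_num
    have k1 : h*h*b + h*h*b' = h*h := by rw [← mul_add, hb1, mul_one]
    have k2 : h*h + h*h*b + h*h*b' = h := by
      have e : h*h + h*h*b + h*h*b' = h*h + h*h*(b+b') := by ring
      rw [e, hb1, mul_one, ← mul_add, hh, mul_one]
    rw [k1, k2]
  · subst hy; simp [hc1, hc2]
  · subst hc; simp [hy1, hy2]
  · subst hc; simp [hy1, hy2]
  · simp [hy1, hy2]
end

section
/- For every α ∈ (0,1), there exist β₁ ≠ β₂ ∈ [0,1] and β₁′ ≠ β₂′ ∈ [0,1] with (β₁+β₂)/2 = (β₁′+β₂′)/2 = α such that the following three properties hold: (i) the uniform mixture (1/2)·P_{α,β₁} + (1/2)·P_{α,β₂} equals the pushforward under (y, b_c, b_s) ↦ (y, b_s, b_c) of the uniform mixture (1/2)·P_{β₁′,α} + (1/2)·P_{β₂′,α}; (ii) in the first pair of environments, the conditional probability P(Y = b | B_c = b) is the same for both environments while P(Y = b | B_s = b) differs between them; (iii) in the second pair of environments, the conditional probability P(Y = b | B_s = b) is the same for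 both environments while P(Y = b | B_c = b) differs between them. Thus there exist two families of training environments sharing the same pooled joint distribution but with opposite invariant coordinates. -/
open MeasureTheory
open scoped ENNReal

/-! Take `β₁ = β₁' = α - ε` and `β₂ = β₂' = α + ε`. Swapping the last two coordinates maps
`P_{β,α}` to `P_{α,β}`, which gives the equality of the pooled laws. Since `B_c = Y·R_c` with `Y`
uniform and independent of `R_c`, `B_c` is uniform, and `{B_c = b, Y = b} = {Y = b, R_c = 1}`;
hence `P(Y = b | B_c = b) = 1 - α` under `P_{α,β}`, whatever `β`, and by the swap symmetry
`P(Y = b | B_s = b) = 1 - β`. -/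

open ProbabilityTheory

instance isFiniteMeasure_radMeas (γ : ℝ) : IsFiniteMeasure (radMeas γ) :=
  ⟨by simp [radMeas]⟩

lemma ofReal_add_ofReal_one_sub {γ : ℝ} (hγ : γ ∈ Set.Icc (0 : ℝ) 1) :
    ENNReal.ofReal γ + ENNReal.ofReal (1 - γ) = 1 := by
  rw [← ENNReal.ofReal_add hγ.1 (by linarith [hγ.2])]
  simp

lemma radMeas_univ {γ : ℝ} (hγ : γ ∈ Set.Icc (0 : ℝ) 1) : radMeas γ Set.univ = 1 := by
  simp [radMeas, ofReal_add_ofReal_one_sub hγ]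

lemma lintegral_radMeas (γ : ℝ) (g : ℤ → ℝ≥0∞) :
    ∫⁻ r, g r ∂radMeas γ = ENNReal.ofReal γ * g (-1) + ENNReal.ofReal (1 - γ) * g 1 := by
  simp [radMeas, lintegral_add_measure, lintegral_dirac]

lemma twoPiece_apply (γ δ : ℝ) (s : Set (ℤ × ℤ × ℤ)) :
    twoPiece γ δ s = ∫⁻ y, ∫⁻ r, ∫⁻ r', s.indicator 1 (y, y * r, y * r')
      ∂radMeas δ ∂radMeas γ ∂radMeas (1 / 2) := by
  rw [twoPiece, Measure.map_apply .of_discrete .of_discrete,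
    ← lintegral_indicator_one .of_discrete, lintegral_prod _ Measurable.of_discrete.aemeasurable]
  congr! 2 with y
  rw [lintegral_prod _ Measurable.of_discrete.aemeasurable]
  rfl

lemma twoPiece_swap (γ δ : ℝ) :
    (twoPiece δ γ).map (fun t : ℤ × ℤ × ℤ => (t.1, t.2.2, t.2.1)) = twoPiece γ δ := by
  have hcomm : (fun t : ℤ × ℤ × ℤ => (t.1, t.2.2, t.2.1)) ∘ (fun t => (t.1, t.1 * t.2.1, t.1 * t.2.2))
      = (fun t => (t.1, t.1 * t.2.1, t.1 * t.2.2)) ∘ Prod.map id Prod.swap := rfl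
  rw [twoPiece, twoPiece, Measure.map_map .of_discrete .of_discrete, hcomm,
    ← Measure.map_map .of_discrete .of_discrete,
    ← Measure.map_prod_map _ _ .of_discrete .of_discrete, Measure.map_id, Measure.prod_swap]

lemma ofReal_half : ENNReal.ofReal (1 / 2) = 2⁻¹ := by
  rw [one_div, ENNReal.ofReal_inv_of_pos two_pos, ENNReal.ofReal_ofNat]

lemma lintegral_radMeas_half (g : ℤ → ℝ≥0∞) :
    ∫⁻ y, g y ∂radMeas (1 / 2) = 2⁻¹ * (g (-1) + g 1) := by
  rw [lintegral_radMeas, show (1 : ℝ) - 1 / 2 = 1 / 2 by norm_num, ofReal_half, mul_add]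

lemma twoPiece_Bc_eq_half (γ δ : ℝ) (hγ : γ ∈ Set.Icc (0 : ℝ) 1) (hδ : δ ∈ Set.Icc (0 : ℝ) 1)
    {b : ℤ} (hb : b = -1 ∨ b = 1) :
    twoPiece γ δ {t | t.2.1 = b} = 2⁻¹ := by
  have hsum := ofReal_add_ofReal_one_sub hγ
  rcases hb with rfl | rfl <;>
  simp only [twoPiece_apply, lintegral_radMeas_half] <;>
  simp [lintegral_radMeas, Set.indicator, radMeas_univ hδ, hsum,
    add_comm (ENNReal.ofReal (1 - γ))]

lemma twoPiece_Bc_inter_Y_eq (γ δ : ℝ) (hδ : δ ∈ Set.Icc (0 : ℝ) 1)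
    {b : ℤ} (hb : b = -1 ∨ b = 1) :
    twoPiece γ δ ({t | t.2.1 = b} ∩ {t | t.1 = b}) = 2⁻¹ * ENNReal.ofReal (1 - γ) := by
  rcases hb with rfl | rfl <;>
  simp only [twoPiece_apply, lintegral_radMeas_half] <;>
  simp [lintegral_radMeas, Set.indicator, radMeas_univ hδ]

lemma cond_twoPiece_Y_given_Bc (γ δ : ℝ) (hγ : γ ∈ Set.Icc (0 : ℝ) 1) (hδ : δ ∈ Set.Icc (0 : ℝ) 1)
    {b : ℤ} (hb : b = -1 ∨ b = 1) :
    (twoPiece γ δ)[{t | t.1 = b} | {t | t.2.1 = b}] = ENNReal.ofReal (1 - γ) := by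
  rw [cond_apply .of_discrete, twoPiece_Bc_eq_half γ δ hγ hδ hb, twoPiece_Bc_inter_Y_eq γ δ hδ hb,
    inv_inv, ← mul_assoc, ENNReal.mul_inv_cancel two_ne_zero ENNReal.ofNat_ne_top, one_mul]

lemma cond_twoPiece_Y_given_Bs (γ δ : ℝ) (hγ : γ ∈ Set.Icc (0 : ℝ) 1) (hδ : δ ∈ Set.Icc (0 : ℝ) 1)
    {b : ℤ} (hb : b = -1 ∨ b = 1) :
    (twoPiece γ δ)[{t | t.1 = b} | {t | t.2.2 = b}] = ENNReal.ofReal (1 - δ) := by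
  rw [← cond_twoPiece_Y_given_Bc δ γ hδ hγ hb, ← twoPiece_swap, cond_apply .of_discrete,
    cond_apply .of_discrete, Measure.map_apply .of_discrete .of_discrete,
    Measure.map_apply .of_discrete .of_discrete]
  rfl

lemma exists_pos_sub_add_mem_Icc {α : ℝ} (hα : α ∈ Set.Ioo (0 : ℝ) 1) :
    ∃ ε > 0, α - ε ∈ Set.Icc (0 : ℝ) 1 ∧ α + ε ∈ Set.Icc (0 : ℝ) 1 := by
  have hle₀ := min_le_left α (1 - α)
  have hle₁ := min_le_right α (1 - α)
  have hpos : 0 < min α (1 - α) := lt_min hα.1 (by linarith [hα.2])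
  exact ⟨min α (1 - α), hpos, ⟨by linarith, by linarith⟩, ⟨by linarith, by linarith⟩⟩

/-- for every `α ∈ (0,1)` there are two families of training environments,
with distinct spurious parameters averaging to `α`, whose pooled joint distributions agree
up to the coordinate swap, while the roles of the invariant and spurious coordinates
(as witnessed by which conditional probabilities stay constant across the pair of
environments) are opposite. -/
theorem twoPiece_no_free_lunch (α : ℝ) (hα : α ∈ Set.Ioo (0 : ℝ) 1) :
    ∃ β₁ β₂ β₁' β₂' : ℝ,
      β₁ ∈ Set.Icc (0 : ℝ) 1 ∧ β₂ ∈ Set.Icc (0 : ℝ) 1 ∧ β₁ ≠ β₂ ∧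
      β₁' ∈ Set.Icc (0 : ℝ) 1 ∧ β₂' ∈ Set.Icc (0 : ℝ) 1 ∧ β₁' ≠ β₂' ∧
      (β₁ + β₂) / 2 = α ∧ (β₁' + β₂') / 2 = α ∧
      ((2 : ℝ≥0∞)⁻¹ • twoPiece α β₁ + (2 : ℝ≥0∞)⁻¹ • twoPiece α β₂ =
        Measure.map (fun t : ℤ × ℤ × ℤ => (t.1, t.2.2, t.2.1))
          ((2 : ℝ≥0∞)⁻¹ • twoPiece β₁' α + (2 : ℝ≥0∞)⁻¹ • twoPiece β₂' α)) ∧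
      (∀ b : ℤ, b = -1 ∨ b = 1 →
        ProbabilityTheory.cond (twoPiece α β₁) {t : ℤ × ℤ × ℤ | t.2.1 = b}
            {t : ℤ × ℤ × ℤ | t.1 = b} =
          ProbabilityTheory.cond (twoPiece α β₂) {t : ℤ × ℤ × ℤ | t.2.1 = b}
            {t : ℤ × ℤ × ℤ | t.1 = b} ∧
        ProbabilityTheory.cond (twoPiece α β₁) {t : ℤ × ℤ × ℤ | t.2.2 = b}
            {t : ℤ × ℤ × ℤ | t.1 = b} ≠
          ProbabilityTheory.cond (twoPiece α β₂) {t : ℤ × ℤ × ℤ | t.2.2 = b}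
            {t : ℤ × ℤ × ℤ | t.1 = b}) ∧
      (∀ b : ℤ, b = -1 ∨ b = 1 →
        ProbabilityTheory.cond (twoPiece β₁' α) {t : ℤ × ℤ × ℤ | t.2.2 = b}
            {t : ℤ × ℤ × ℤ | t.1 = b} =
          ProbabilityTheory.cond (twoPiece β₂' α) {t : ℤ × ℤ × ℤ | t.2.2 = b}
            {t : ℤ × ℤ × ℤ | t.1 = b} ∧
        ProbabilityTheory.cond (twoPiece β₁' α) {t : ℤ × ℤ × ℤ | t.2.1 = b}
            {t : ℤ × ℤ × ℤ | t.1 = b} ≠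
          ProbabilityTheory.cond (twoPiece β₂' α) {t : ℤ × ℤ × ℤ | t.2.1 = b}
            {t : ℤ × ℤ × ℤ | t.1 = b}) := by
  obtain ⟨ε, hε, h₁, h₂⟩ := exists_pos_sub_add_mem_Icc hα
  have hα' : α ∈ Set.Icc (0 : ℝ) 1 := Set.Ioo_subset_Icc_self hα
  have hne : α - ε ≠ α + ε := by linarith
  have hne' : ENNReal.ofReal (1 - (α - ε)) ≠ ENNReal.ofReal (1 - (α + ε)) := by
    rw [Ne, ENNReal.ofReal_eq_ofReal_iff (by linarith [h₁.2]) (by linarith [h₂.2])]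
    linarith
  refine ⟨α - ε, α + ε, α - ε, α + ε, h₁, h₂, hne, h₁, h₂, hne, by ring, by ring, ?_,
    fun b hb => ⟨?_, ?_⟩, fun b hb => ⟨?_, ?_⟩⟩
  · rw [Measure.map_add _ _ .of_discrete, Measure.map_smul, Measure.map_smul, twoPiece_swap,
      twoPiece_swap]
  · rw [cond_twoPiece_Y_given_Bc _ _ hα' h₁ hb, cond_twoPiece_Y_given_Bc _ _ hα' h₂ hb]
  · rwa [cond_twoPiece_Y_given_Bs _ _ hα' h₁ hb, cond_twoPiece_Y_given_Bs _ _ hα' h₂ hb]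
  · rw [cond_twoPiece_Y_given_Bs _ _ h₁ hα' hb, cond_twoPiece_Y_given_Bs _ _ h₂ hα' hb]
  · rwa [cond_twoPiece_Y_given_Bc _ _ h₁ hα' hb, cond_twoPiece_Y_given_Bc _ _ h₂ hα' hb]
end

section
/- Let α, β ∈ (0,1) with β ≤ α. Under the two-piece environment P_{α,β}, for every pair (b_c, b_s) ∈ {-1,1}², the event {B_c = b_c, B_s = b_s} has positive probability and P(Y = b_s | B_c = b_c, B_s = b_s) ≥ P(Y = b_c | B_c = b_c, B_s = b_s); moreover the inequality is strict whenever b_c ≠ b_s and β < α. That is, when the spurious correlation is at least as strong as the invariant one, the Bayes-optimal predictor of Y from the pair (B_c, B_s) outputs the spurious bit B_s. -/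
/-!
On the event `{B_c = b_c, B_s = b_s}` the label value `y` carries weight
`½ · p_α(y b_c) · p_β(y b_s)`, since `y² = 1` makes `(y, y b_c, y b_s)` the only point mapped to
`(y, b_c, b_s)`. When the bits agree both predictions coincide; when they disagree, the spurious
bit has weight `½ α (1 - β)` against `½ (1 - α) β` for the invariant one, and
`α (1 - β) - (1 - α) β = α - β`.
-/

open MeasureTheory
open scoped ENNReal

open ProbabilityTheory

/-- The mass function `p_γ` of `Rad(γ)`; only its values on `{-1, 1}` matter. -/
def radMass (γ : ℝ) (r : ℤ) : ℝ := if r = -1 then γ else 1 - γ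

lemma radMass_nonneg {γ : ℝ} (hγ : γ ∈ Set.Icc (0 : ℝ) 1) (r : ℤ) : 0 ≤ radMass γ r := by
  unfold radMass; split_ifs <;> linarith [hγ.1, hγ.2]

lemma radMass_pos {γ : ℝ} (hγ : γ ∈ Set.Ioo (0 : ℝ) 1) (r : ℤ) : 0 < radMass γ r := by
  unfold radMass; split_ifs <;> linarith [hγ.1, hγ.2]

lemma radMeas_singleton (γ : ℝ) {r : ℤ} (hr : r = -1 ∨ r = 1) :
    radMeas γ {r} = ENNReal.ofReal (radMass γ r) := by
  rcases hr with rfl | rfl <;> simp [radMeas, radMass]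

instance (γ : ℝ) : IsFiniteMeasure (radMeas γ) := by
  have := (Measure.dirac (-1 : ℤ)).smul_finite (ENNReal.ofReal_ne_top (r := γ))
  have := (Measure.dirac (1 : ℤ)).smul_finite (ENNReal.ofReal_ne_top (r := 1 - γ))
  unfold radMeas; infer_instance

instance (α β : ℝ) : IsFiniteMeasure (twoPiece α β) := by
  unfold twoPiece; infer_instance

lemma sign_mul_sign {y c : ℤ} (hy : y = -1 ∨ y = 1) (hc : c = -1 ∨ c = 1) :
    y * c = -1 ∨ y * c = 1 := by
  rcases hy with rfl | rfl <;> rcases hc with rfl | rfl <;> norm_num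

lemma sign_mul_self_eq_one {y : ℤ} (hy : y = -1 ∨ y = 1) : y * y = 1 := by
  rcases hy with rfl | rfl <;> norm_num

lemma sign_mul_of_ne {y c : ℤ} (hy : y = -1 ∨ y = 1) (hc : c = -1 ∨ c = 1) (hne : y ≠ c) :
    y * c = -1 := by
  rcases hy with rfl | rfl <;> rcases hc with rfl | rfl <;> simp_all

lemma twoPiece_singleton {α β : ℝ} (hα : α ∈ Set.Icc (0 : ℝ) 1) {y c s : ℤ}
    (hy : y = -1 ∨ y = 1) (hc : c = -1 ∨ c = 1) (hs : s = -1 ∨ s = 1) :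
    twoPiece α β {(y, c, s)} =
      ENNReal.ofReal (2⁻¹ * radMass α (y * c) * radMass β (y * s)) := by
  have hpre : (fun t : ℤ × ℤ × ℤ => (t.1, t.1 * t.2.1, t.1 * t.2.2)) ⁻¹' {(y, c, s)} =
      {y} ×ˢ {y * c} ×ˢ {y * s} := by
    ext ⟨a, b, d⟩
    simp only [Set.mem_preimage, Set.mem_singleton_iff, Set.mem_prod, Prod.mk.injEq]
    constructor <;> rintro ⟨rfl, rfl, rfl⟩ <;> simp [← mul_assoc, sign_mul_self_eq_one hy]
  rw [twoPiece, Measure.map_apply (measurable_of_countable _) (Set.to_countable _).measurableSet,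
    hpre, Measure.prod_prod, Measure.prod_prod, radMeas_singleton _ hy,
    radMeas_singleton _ (sign_mul_sign hy hc), radMeas_singleton _ (sign_mul_sign hy hs),
    ← mul_assoc, ← ENNReal.ofReal_mul (radMass_nonneg (by norm_num) y),
    ← ENNReal.ofReal_mul (mul_nonneg (radMass_nonneg (by norm_num) y) (radMass_nonneg hα _))]
  rcases hy with rfl | rfl <;> norm_num [radMass]

lemma twoPiece_inter_label {α β : ℝ} (hα : α ∈ Set.Icc (0 : ℝ) 1) {y c s : ℤ}
    (hy : y = -1 ∨ y = 1) (hc : c = -1 ∨ c = 1) (hs : s = -1 ∨ s = 1) :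
    twoPiece α β ({t : ℤ × ℤ × ℤ | t.2.1 = c ∧ t.2.2 = s} ∩ {t | t.1 = y}) =
      ENNReal.ofReal (2⁻¹ * radMass α (y * c) * radMass β (y * s)) := by
  rw [← twoPiece_singleton hα hy hc hs]
  congr 1
  ext ⟨a, b, d⟩
  simp only [Set.mem_inter_iff, Set.mem_ofPred_eq, Set.mem_singleton_iff, Prod.mk.injEq]
  tauto

/-- when the spurious correlation is at least as strong as the invariant one
(`β ≤ α`), every pair of coordinate values has positive probability and the Bayes-optimal
prediction of the label from the pair of coordinates is the spurious bit, strictly so when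
the bits disagree and `β < α`. -/
theorem twoPiece_bayes_spurious (α β : ℝ) (hα : α ∈ Set.Ioo (0 : ℝ) 1)
    (hβ : β ∈ Set.Ioo (0 : ℝ) 1) (hle : β ≤ α)
    (bc bs : ℤ) (hbc : bc = -1 ∨ bc = 1) (hbs : bs = -1 ∨ bs = 1) :
    0 < twoPiece α β {t : ℤ × ℤ × ℤ | t.2.1 = bc ∧ t.2.2 = bs} ∧
    ProbabilityTheory.cond (twoPiece α β) {t : ℤ × ℤ × ℤ | t.2.1 = bc ∧ t.2.2 = bs}
        {t : ℤ × ℤ × ℤ | t.1 = bc} ≤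
      ProbabilityTheory.cond (twoPiece α β) {t : ℤ × ℤ × ℤ | t.2.1 = bc ∧ t.2.2 = bs}
        {t : ℤ × ℤ × ℤ | t.1 = bs} ∧
    (bc ≠ bs → β < α →
      ProbabilityTheory.cond (twoPiece α β) {t : ℤ × ℤ × ℤ | t.2.1 = bc ∧ t.2.2 = bs}
          {t : ℤ × ℤ × ℤ | t.1 = bc} <
        ProbabilityTheory.cond (twoPiece α β) {t : ℤ × ℤ × ℤ | t.2.1 = bc ∧ t.2.2 = bs}
          {t : ℤ × ℤ × ℤ | t.1 = bs}) := by
  set S := {t : ℤ × ℤ × ℤ | t.2.1 = bc ∧ t.2.2 = bs}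
  have hS : MeasurableSet S := (Set.to_countable S).measurableSet
  have hmass (y : ℤ) (hy : y = -1 ∨ y = 1) :=
    twoPiece_inter_label (β := β) (Set.Ioo_subset_Icc_self hα) hy hbc hbs
  have hpos : 0 < twoPiece α β S := by
    refine lt_of_lt_of_le ?_ (measure_mono (Set.inter_subset_left (t := {t | t.1 = bs})))
    rw [hmass bs hbs, ENNReal.ofReal_pos]
    exact mul_pos (mul_pos (by norm_num) (radMass_pos hα _)) (radMass_pos hβ _)
  rw [cond_apply hS, cond_apply hS]
  rcases eq_or_ne bc bs with rfl | hne
  · exact ⟨hpos, le_rfl, fun h => absurd rfl h⟩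
  rw [hmass bc hbc, hmass bs hbs, sign_mul_of_ne hbc hbs hne, sign_mul_of_ne hbs hbc hne.symm,
    sign_mul_self_eq_one hbc, sign_mul_self_eq_one hbs]
  simp only [radMass, if_neg (by norm_num : (1 : ℤ) ≠ -1), if_pos]
  have hweight : 2⁻¹ * (1 - α) * β ≤ 2⁻¹ * α * (1 - β) := by nlinarith
  refine ⟨hpos, mul_le_mul_right (ENNReal.ofReal_le_ofReal hweight) _, fun _ hlt => ?_⟩
  have hweight_lt : 2⁻¹ * (1 - α) * β < 2⁻¹ * α * (1 - β) := by nlinarith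
  have hμS_inv : (twoPiece α β S)⁻¹ ≠ 0 := ENNReal.inv_ne_zero.mpr (measure_ne_top _ _)
  refine (ENNReal.mul_lt_mul_iff_right hμS_inv (ENNReal.inv_ne_top.mpr hpos.ne')).mpr ?_
  exact (ENNReal.ofReal_lt_ofReal_iff (hweight_lt.trans_le' (by nlinarith [hα.2, hβ.1]))).mpr hweight_lt
end

section
/- Let α ∈ [0,1] and β ∈ (0,1) and consider the two-piece environment P_{α,β}. Then the conditional law of the pair (Y, B_c) given the event {B_s = Y} equals its conditional law given the event {B_s ≠ Y} (both events having positive probability), whereas the conditional law of the pair (Y, B_s) given {B_s = Y} differs from its conditional law given {B_s ≠ Y}. Hence the invariant coordinate B_c is exactly the coordinate whose joint relationship with the label Y is unchanged across the correctness-based partition induced by the assistant prediction ŷ = B_s, which is the identification principle underlying GALA's contrast between positive and negative sets. -/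
/-!
Write `P_{α,β}` as the image of the latent triple `((Y, R_c), R_s)` under
`(y, c, s) ↦ (y, y c, y s)`. Since `Y ≠ 0` almost surely, the event `{B_s = Y}` is, up to a null
set, the cylinder `{R_s = 1}` over the last, independent factor, and `{B_s ≠ Y}` is `{R_s ≠ 1}`.
Conditioning a product measure on a cylinder of the last factor does not change the law of the
first factors, so both conditional laws of `(Y, B_c) = (Y, Y R_c)` are the normalised law of
`(Y, Y R_c)`. The law of `(Y, B_s)` given `{B_s = Y}` gives the diagonal mass one, whereas given
`{B_s ≠ Y}` it gives it mass zero.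
-/

open MeasureTheory
open scoped ENNReal

open Set

namespace ProbabilityTheory

variable {Ω Ω' α β : Type*} [MeasurableSpace Ω] [MeasurableSpace Ω'] [MeasurableSpace α]
  [MeasurableSpace β]

lemma cond_congr_ae {μ : Measure Ω} {s t : Set Ω} (h : s =ᵐ[μ] t) : μ[|s] = μ[|t] := by
  rw [cond, cond, measure_congr h, Measure.restrict_congr_set h]

lemma cond_map {μ : Measure Ω} {f : Ω → Ω'} (hf : Measurable f) {s : Set Ω'}
    (hs : MeasurableSet s) : (μ.map f)[|s] = (μ[|f ⁻¹' s]).map f := by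
  rw [cond, cond, Measure.map_apply hf hs, Measure.restrict_map hf hs, Measure.map_smul]

lemma map_fst_cond_preimage_snd {μ : Measure α} {ν : Measure β} [SFinite μ] [SFinite ν]
    {A : Set β} (h0 : ν A ≠ 0) (htop : ν A ≠ ∞) :
    ((μ.prod ν)[|Prod.snd ⁻¹' A]).map Prod.fst = μ[|univ] := by
  have hrestrict : (μ.prod ν).restrict (univ ×ˢ A) = μ.prod (ν.restrict A) := by
    rw [← Measure.prod_restrict, Measure.restrict_univ]
  rw [cond, cond, ← univ_prod, hrestrict, Measure.prod_prod, Measure.restrict_univ,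
    Measure.map_smul, Measure.map_fst_prod, Measure.restrict_apply_univ, smul_smul,
    ENNReal.mul_inv (.inr htop) (.inr h0), mul_assoc, ENNReal.inv_mul_cancel h0 htop, mul_one]

lemma map_cond_ne_map_cond_compl {μ : Measure Ω} [IsFiniteMeasure μ] {g : Ω → α}
    (hg : Measurable g) {D : Set α} (hD : MeasurableSet D) (h0 : μ (g ⁻¹' D) ≠ 0) :
    (μ[|g ⁻¹' D]).map g ≠ (μ[|(g ⁻¹' D)ᶜ]).map g := by
  intro h
  have hD' := congrArg (· D) h
  simp only [Measure.map_apply hg hD] at hD'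
  rw [cond_apply_self h0 (measure_ne_top _ _), cond_apply (hD.preimage hg).compl,
    compl_inter_self, measure_empty, mul_zero] at hD'
  exact one_ne_zero hD'

end ProbabilityTheory

open ProbabilityTheory

instance inst_s15 (γ : ℝ) : IsFiniteMeasure (radMeas γ) :=
  ⟨by simp [radMeas, ENNReal.add_lt_top]⟩

lemma radMeas_univ_ne_zero (γ : ℝ) : radMeas γ univ ≠ 0 := by
  have : ¬(γ ≤ 0 ∧ 1 - γ ≤ 0) := fun h => by linarith [h.1, h.2]
  simpa [radMeas, ENNReal.ofReal_eq_zero] using this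

lemma radMeas_singleton_one (γ : ℝ) : radMeas γ {1} = ENNReal.ofReal (1 - γ) := by
  simp [radMeas]

lemma radMeas_compl_singleton_one (γ : ℝ) : radMeas γ {1}ᶜ = ENNReal.ofReal γ := by
  simp [radMeas]

lemma ae_radMeas_ne_zero (γ : ℝ) : ∀ᵐ y ∂radMeas γ, y ≠ 0 := by
  simp [ae_iff, radMeas]

instance inst_s15_2 (α β : ℝ) : IsFiniteMeasure (twoPiece α β) := by
  unfold twoPiece; infer_instance

noncomputable abbrev twoPieceLatent (α β : ℝ) : Measure ((ℤ × ℤ) × ℤ) :=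
  ((radMeas (1 / 2)).prod (radMeas α)).prod (radMeas β)

def twoPieceObs (p : (ℤ × ℤ) × ℤ) : ℤ × ℤ × ℤ :=
  (p.1.1, p.1.1 * p.1.2, p.1.1 * p.2)

lemma twoPiece_eq_map (α β : ℝ) : twoPiece α β = (twoPieceLatent α β).map twoPieceObs := by
  rw [twoPiece, ← Measure.prodAssoc_prod,
    Measure.map_map (measurable_of_countable _) MeasurableEquiv.prodAssoc.measurable]
  rfl

lemma twoPieceObs_preimage_ae_eq (α β : ℝ) :
    twoPieceObs ⁻¹' {t | t.2.2 = t.1} =ᵐ[twoPieceLatent α β] Prod.snd ⁻¹' {1} := by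
  filter_upwards [(Measure.quasiMeasurePreserving_fst.comp
    Measure.quasiMeasurePreserving_fst).ae (ae_radMeas_ne_zero (1 / 2))] with p hp
  exact propext (mul_eq_left₀ hp)

section CylinderEvent

variable {α β : ℝ} {s : Set (ℤ × ℤ × ℤ)} {A : Set ℤ}

lemma twoPiece_pos_of_ae_eq (h : twoPieceObs ⁻¹' s =ᵐ[twoPieceLatent α β] Prod.snd ⁻¹' A)
    (h0 : radMeas β A ≠ 0) : 0 < twoPiece α β s := by
  rw [twoPiece_eq_map, Measure.map_apply (measurable_of_countable _) .of_discrete,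
    measure_congr h, ← univ_prod, Measure.prod_prod, ← univ_prod_univ, Measure.prod_prod]
  exact pos_iff_ne_zero.2 <|
    mul_ne_zero (mul_ne_zero (radMeas_univ_ne_zero _) (radMeas_univ_ne_zero _)) h0

lemma map_cond_twoPiece_of_ae_eq
    (h : twoPieceObs ⁻¹' s =ᵐ[twoPieceLatent α β] Prod.snd ⁻¹' A) (h0 : radMeas β A ≠ 0) :
    ((twoPiece α β)[|s]).map (fun t => (t.1, t.2.1)) =
      (((radMeas (1 / 2)).prod (radMeas α))[|univ]).map (fun p => (p.1, p.1 * p.2)) := by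
  rw [twoPiece_eq_map, cond_map (measurable_of_countable _) .of_discrete,
    Measure.map_map (measurable_of_countable _) (measurable_of_countable _), cond_congr_ae h,
    show (fun t : ℤ × ℤ × ℤ => (t.1, t.2.1)) ∘ twoPieceObs =
      (fun p : ℤ × ℤ => (p.1, p.1 * p.2)) ∘ Prod.fst from rfl,
    ← Measure.map_map (measurable_of_countable _) measurable_fst,
    map_fst_cond_preimage_snd h0 (measure_ne_top _ _)]

end CylinderEvent

theorem twoPiece_gala_identification_general (α β : ℝ)
    (hβ : β ∈ Set.Ioo (0 : ℝ) 1) :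
    0 < twoPiece α β {t : ℤ × ℤ × ℤ | t.2.2 = t.1} ∧
    0 < twoPiece α β {t : ℤ × ℤ × ℤ | t.2.2 ≠ t.1} ∧
    Measure.map (fun t : ℤ × ℤ × ℤ => (t.1, t.2.1))
        (ProbabilityTheory.cond (twoPiece α β) {t : ℤ × ℤ × ℤ | t.2.2 = t.1}) =
      Measure.map (fun t : ℤ × ℤ × ℤ => (t.1, t.2.1))
        (ProbabilityTheory.cond (twoPiece α β) {t : ℤ × ℤ × ℤ | t.2.2 ≠ t.1}) ∧
    Measure.map (fun t : ℤ × ℤ × ℤ => (t.1, t.2.2))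
        (ProbabilityTheory.cond (twoPiece α β) {t : ℤ × ℤ × ℤ | t.2.2 = t.1}) ≠
      Measure.map (fun t : ℤ × ℤ × ℤ => (t.1, t.2.2))
        (ProbabilityTheory.cond (twoPiece α β) {t : ℤ × ℤ × ℤ | t.2.2 ≠ t.1}) := by
  have hS := twoPieceObs_preimage_ae_eq α β
  have hT : twoPieceObs ⁻¹' {t | t.2.2 ≠ t.1} =ᵐ[twoPieceLatent α β] Prod.snd ⁻¹' {1}ᶜ :=
    hS.compl
  have hβS : radMeas β {1} ≠ 0 := by simpa [radMeas_singleton_one] using hβ.2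
  have hβT : radMeas β {1}ᶜ ≠ 0 := by simpa [radMeas_compl_singleton_one] using hβ.1
  have hposS := twoPiece_pos_of_ae_eq hS hβS
  refine ⟨hposS, twoPiece_pos_of_ae_eq hT hβT, ?_, ?_⟩
  · rw [map_cond_twoPiece_of_ae_eq hS hβS, map_cond_twoPiece_of_ae_eq hT hβT]
  · exact map_cond_ne_map_cond_compl (g := fun t : ℤ × ℤ × ℤ => (t.1, t.2.2))
      (D := {p | p.2 = p.1}) (measurable_of_countable _) .of_discrete hposS.ne'

/-- both correctness-based events of the assistant prediction (the spurious
coordinate) have positive probability; the conditional law of the pair (label, invariant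
coordinate) is identical on the positive and negative sets, whereas the conditional law of
the pair (label, spurious coordinate) differs between them. -/
theorem twoPiece_gala_identification (α β : ℝ) (hα : α ∈ Set.Icc (0 : ℝ) 1)
    (hβ : β ∈ Set.Ioo (0 : ℝ) 1) :
    0 < twoPiece α β {t : ℤ × ℤ × ℤ | t.2.2 = t.1} ∧
    0 < twoPiece α β {t : ℤ × ℤ × ℤ | t.2.2 ≠ t.1} ∧
    Measure.map (fun t : ℤ × ℤ × ℤ => (t.1, t.2.1))
        (ProbabilityTheory.cond (twoPiece α β) {t : ℤ × ℤ × ℤ | t.2.2 = t.1}) =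
      Measure.map (fun t : ℤ × ℤ × ℤ => (t.1, t.2.1))
        (ProbabilityTheory.cond (twoPiece α β) {t : ℤ × ℤ × ℤ | t.2.2 ≠ t.1}) ∧
    Measure.map (fun t : ℤ × ℤ × ℤ => (t.1, t.2.2))
        (ProbabilityTheory.cond (twoPiece α β) {t : ℤ × ℤ × ℤ | t.2.2 = t.1}) ≠
      Measure.map (fun t : ℤ × ℤ × ℤ => (t.1, t.2.2))
        (ProbabilityTheory.cond (twoPiece α β) {t : ℤ × ℤ × ℤ | t.2.2 ≠ t.1}) :=
  twoPiece_gala_identification_general α β hβ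
end
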